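/- Assume that U_ad is nonempty, convex, closed and bounded, and that each cost function Ĵ_1,…,Ĵ_k is weakly lower semicontinuous (i.e. lower semicontinuous with respect to the weak topology of U) and bounded from below. Then for every z ∈ ℝ^k and every r ∈ ℝ^k with r > 0, the reformulated Pascoletti–Serafini problem (RP^PS_{z,r}) has a global solution ū ∈ U_ad, and this global solution can be chosen to be Pareto optimal. -/

import Mathlib

open Filter Set

section Helpers

variable {X : Type*} [TopologicalSpace X]

/-- Restriction of a function lower semicontinuous on `K` is lower semicontinuous
on the subtype `K`. -/
lemma lsc_restrict {K : Set X} {f : X → ℝ} (hf : LowerSemicontinuousOn f K) :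
    LowerSemicontinuous (K.restrict f) := by
  intro x y hy
  have h := hf x x.2 y hy
  rw [nhdsWithin_eq_map_subtype_coe x.2] at h
  exact eventually_map.mp h

/-- Sublevel sets of a lower semicontinuous function on a compact set are compact. -/
lemma isCompact_sublevel {K : Set X} (hK : IsCompact K) {f : X → ℝ}
    (hf : LowerSemicontinuousOn f K) (c : ℝ) :
    IsCompact {x | x ∈ K ∧ f x ≤ c} := by
  have : CompactSpace K := isCompact_iff_compactSpace.mp hK
  have h1 : IsClosed (K.restrict f ⁻¹' Set.Iic c) :=
    (lsc_restrict hf).isClosed_preimage c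
  have h2 := h1.isCompact.image continuous_subtype_val
  convert h2 using 1
  ext x
  constructor
  · rintro ⟨hxK, hfx⟩
    exact ⟨⟨x, hxK⟩, hfx, rfl⟩
  · rintro ⟨⟨a, ha⟩, hfa, rfl⟩
    exact ⟨ha, hfa⟩

/-- A lower semicontinuous function, bounded from below, attains its minimum
on a nonempty compact set. -/
lemma exists_min_of_lsc {K : Set X} (hK : IsCompact K) (hne : K.Nonempty)
    {f : X → ℝ} (hf : LowerSemicontinuousOn f K) (hbd : BddBelow (f '' K)) :
    ∃ x ∈ K, ∀ y ∈ K, f x ≤ f y := by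
  have hcs : CompactSpace K := isCompact_iff_compactSpace.mp hK
  set m := sInf (f '' K) with hm
  set T : ℕ → Set K := fun n => K.restrict f ⁻¹' Set.Iic (m + 1 / (n + 1)) with hT
  have hTcl : ∀ n, IsClosed (T n) := fun n => (lsc_restrict hf).isClosed_preimage _
  have hTc : ∀ n, IsCompact (T n) := fun n => (hTcl n).isCompact
  have hTn : ∀ n, (T n).Nonempty := by
    intro n
    have hpos : (0:ℝ) < 1 / (n + 1) := by positivity
    have hlt : m < m + 1 / (n + 1) := lt_add_of_pos_right _ hpos
    obtain ⟨v, hv, hv'⟩ := exists_lt_of_csInf_lt (hne.image f) hlt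
    obtain ⟨x, hx, rfl⟩ := hv
    exact ⟨⟨x, hx⟩, le_of_lt hv'⟩
  have hmono : ∀ n, T (n + 1) ⊆ T n := by
    intro n x hx
    simp only [T, Set.mem_preimage, Set.mem_Iic] at hx ⊢
    refine hx.trans (add_le_add_right ?_ m)
    have h1 : (0:ℝ) < (n:ℝ) + 1 := by positivity
    apply one_div_le_one_div_of_le h1
    push_cast
    linarith
  obtain ⟨x, hx⟩ := IsCompact.nonempty_iInter_of_sequence_nonempty_isCompact_isClosed
    T hmono hTn (hTc 0) hTcl
  refine ⟨↑x, x.2, fun y hy => ?_⟩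
  have hfx : f ↑x ≤ m := by
    by_contra h
    push_neg at h
    obtain ⟨n, hn⟩ := exists_nat_one_div_lt (sub_pos.mpr h)
    have hmem := Set.mem_iInter.mp hx n
    simp only [T, Set.mem_preimage, Set.mem_Iic, Set.restrict_apply] at hmem
    have hmem' : f ↑x ≤ m + 1 / (↑n + 1) := hmem
    linarith
  exact hfx.trans (csInf_le hbd ⟨y, hy, rfl⟩)

end Helpers

section Weak

variable (U : Type*) [NormedAddCommGroup U] [InnerProductSpace ℝ U] [CompleteSpace U]

open InnerProductSpace NormedSpace

/-- The canonical homeomorphism between a real Hilbert space with its weak topology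
and its dual with the weak-* topology, given by the Riesz representation. -/
noncomputable def weakSpaceHomeoWeakDual : WeakSpace ℝ U ≃ₜ WeakDual ℝ U where
  toFun x := StrongDual.toWeakDual (toDual ℝ U ((toWeakSpace ℝ U).symm x))
  invFun f := toWeakSpace ℝ U ((toDual ℝ U).symm (StrongDual.toWeakDual.symm f))
  left_inv x := by
    simp only [LinearEquiv.symm_apply_apply, LinearEquiv.apply_symm_apply,
      LinearIsometryEquiv.symm_apply_apply, LinearIsometryEquiv.apply_symm_apply]
  right_inv f := by
    simp only [LinearEquiv.symm_apply_apply, LinearEquiv.apply_symm_apply,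
      LinearIsometryEquiv.symm_apply_apply, LinearIsometryEquiv.apply_symm_apply]
  continuous_toFun := by
    refine WeakDual.continuous_of_continuous_eval fun y => ?_
    have h : (fun x : WeakSpace ℝ U =>
        (StrongDual.toWeakDual (toDual ℝ U ((toWeakSpace ℝ U).symm x))) y)
        = fun x : WeakSpace ℝ U => ((topDualPairing ℝ U).flip) x (toDual ℝ U y) := by
      funext x
      show ⟪(toWeakSpace ℝ U).symm x, y⟫_ℝ = ⟪y, (toWeakSpace ℝ U).symm x⟫_ℝ
      exact real_inner_comm _ _
    rw [h]
    exact WeakBilin.eval_continuous _ _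
  continuous_invFun := by
    refine WeakBilin.continuous_of_continuous_eval _ fun g => ?_
    have h : (fun f : WeakDual ℝ U => ((topDualPairing ℝ U).flip)
          (toWeakSpace ℝ U ((toDual ℝ U).symm (StrongDual.toWeakDual.symm f))) g)
        = fun f : WeakDual ℝ U => f ((toDual ℝ U).symm g) := by
      funext f
      show (g ((toDual ℝ U).symm (StrongDual.toWeakDual.symm f)) : ℝ) = _
      rw [show (g ((toDual ℝ U).symm (StrongDual.toWeakDual.symm f)) : ℝ)
            = ⟪(toDual ℝ U).symm g, (toDual ℝ U).symm (StrongDual.toWeakDual.symm f)⟫_ℝ from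
          (toDual_symm_apply).symm, real_inner_comm]
      exact toDual_symm_apply
    rw [h]
    exact WeakDual.eval_continuous _

variable {U}

/-- A nonempty, convex, closed and bounded set in a real Hilbert space is
weakly compact. -/
lemma isCompact_weak_image {Uad : Set U} (hconv : Convex ℝ Uad)
    (hclosed : IsClosed Uad) (hbdd : Bornology.IsBounded Uad) :
    IsCompact (toWeakSpace ℝ U '' Uad) := by
  set e := weakSpaceHomeoWeakDual U with he
  have hKcl : IsClosed (toWeakSpace ℝ U '' Uad) := by
    have h := hconv.toWeakSpace_closure (𝕜 := ℝ)
    rw [hclosed.closure_eq] at h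
    rw [h]
    exact isClosed_closure
  have hScl : IsClosed (e '' (toWeakSpace ℝ U '' Uad)) := e.isClosedMap _ hKcl
  have himg : e '' (toWeakSpace ℝ U '' Uad)
      = StrongDual.toWeakDual '' (toDual ℝ U '' Uad) := by
    rw [← Set.image_comp, ← Set.image_comp]
    apply Set.image_congr
    intro u _
    simp [he, weakSpaceHomeoWeakDual]
  have hpre : StrongDual.toWeakDual ⁻¹' (e '' (toWeakSpace ℝ U '' Uad))
      = toDual ℝ U '' Uad := by
    rw [himg, Set.preimage_image_eq _ StrongDual.toWeakDual.injective]
  have hbd : Bornology.IsBounded (toDual ℝ U '' Uad) :=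
    (toDual ℝ U).isometry.lipschitz.isBounded_image hbdd
  have hScomp : IsCompact (e '' (toWeakSpace ℝ U '' Uad)) :=
    WeakDual.isCompact_of_bounded_of_closed (show Bornology.IsBounded (StrongDual.toWeakDual ⁻¹' (e '' (toWeakSpace ℝ U '' Uad))) by rw [hpre]; exact hbd) hScl
  have h2 := hScomp.image e.symm.continuous
  have himg2 : e.symm '' (e '' (toWeakSpace ℝ U '' Uad)) = toWeakSpace ℝ U '' Uad := by
    rw [← Set.image_comp]
    simp
  rwa [himg2] at h2

end Weak

/-- The Pascoletti–Serafini scalarization function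
`u ↦ max_{1 ≤ i ≤ k} (Ĵ_i(u) − z_i) / r_i`, evaluated at the objective vector `y`. -/
noncomputable def psScal {k : ℕ} (hk : 0 < k) (z r : Fin k → ℝ) (y : Fin k → ℝ) : ℝ :=
  Finset.univ.sup' (Finset.univ_nonempty_iff.mpr ⟨⟨0, hk⟩⟩) fun i => (y i - z i) / r i

/-- **Existence of Pareto optimal global solutions of the reformulated PS problem.**
Let `Uad` be nonempty, convex, closed and bounded, and assume each cost function
`J_i` is weakly lower semicontinuous (lower semicontinuous for the weak topology of
the Hilbert space `U`) and bounded from below.  Then for every reference point `z`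
and every target direction `r > 0` the reformulated Pascoletti–Serafini problem
`min_{u ∈ Uad} max_i (J_i(u) − z_i)/r_i` has a global solution `ubar ∈ Uad` which is
moreover Pareto optimal. -/
theorem reformulated_psProblem_has_pareto_optimal_global_solution
    {U : Type*} [NormedAddCommGroup U] [InnerProductSpace ℝ U] [CompleteSpace U]
    {k : ℕ} (hk : 2 ≤ k) (Uad : Set U) (hUad : Uad.Nonempty)
    (hconv : Convex ℝ Uad) (hclosed : IsClosed Uad) (hbdd : Bornology.IsBounded Uad)
    (J : U → Fin k → ℝ)
    (hlsc : ∀ i, LowerSemicontinuousOn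
      (fun u : WeakSpace ℝ U => J ((toWeakSpace ℝ U).symm u) i)
      ((toWeakSpace ℝ U) '' Uad))
    (hbelow : ∀ i, ∃ c : ℝ, ∀ u ∈ Uad, c ≤ J u i)
    (z r : Fin k → ℝ) (hr : ∀ i, 0 < r i) :
    ∃ ubar ∈ Uad,
      (∀ u ∈ Uad, psScal (by omega) z r (J ubar) ≤ psScal (by omega) z r (J u)) ∧
      (∀ ut ∈ Uad, ¬ (J ut ≤ J ubar ∧ J ut ≠ J ubar)) := by
  have hk0 : 0 < k := by omega
  have i0 : Fin k := ⟨0, hk0⟩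
  set K : Set (WeakSpace ℝ U) := (toWeakSpace ℝ U) '' Uad with hKdef
  have hKc : IsCompact K := isCompact_weak_image hconv hclosed hbdd
  have hKne : K.Nonempty := hUad.image _
  set G : WeakSpace ℝ U → ℝ :=
    fun x => psScal hk0 z r (J ((toWeakSpace ℝ U).symm x)) with hGdef
  have hGlsc : LowerSemicontinuousOn G K := by
    intro x hx y hy
    simp only [G, psScal] at hy
    obtain ⟨i, -, hi⟩ := (Finset.lt_sup'_iff _).mp hy
    have h1 : y * r i + z i < J ((toWeakSpace ℝ U).symm x) i := by
      rw [lt_div_iff₀ (hr i)] at hi; linarith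
    filter_upwards [hlsc i x hx _ h1] with x' hx'
    have h2 : y < (J ((toWeakSpace ℝ U).symm x') i - z i) / r i := by
      rw [lt_div_iff₀ (hr i)]; linarith
    have h3 : (J ((toWeakSpace ℝ U).symm x') i - z i) / r i
        ≤ psScal hk0 z r (J ((toWeakSpace ℝ U).symm x')) :=
      Finset.le_sup' (fun j => (J ((toWeakSpace ℝ U).symm x') j - z j) / r j)
        (Finset.mem_univ i)
    simp only [hGdef]
    exact h2.trans_le h3
  choose c hc using hbelow
  have hGval : ∀ u : U, G (toWeakSpace ℝ U u) = psScal hk0 z r (J u) := by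
    intro u; simp [G]
  have hGbdd : BddBelow (G '' K) := by
    refine ⟨(c i0 - z i0) / r i0, ?_⟩
    rintro v ⟨x, ⟨u, hu, rfl⟩, rfl⟩
    rw [hGval]
    refine le_trans ?_ (Finset.le_sup' _ (Finset.mem_univ i0))
    exact (div_le_div_iff_of_pos_right (hr i0)).mpr (by linarith [hc i0 u hu])
  obtain ⟨xbar, hxbarK, hxbarmin⟩ := exists_min_of_lsc hKc hKne hGlsc hGbdd
  set M : Set (WeakSpace ℝ U) := {x | x ∈ K ∧ G x ≤ G xbar} with hMdef
  have hMc : IsCompact M := isCompact_sublevel hKc hGlsc _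
  have hMne : M.Nonempty := ⟨xbar, hxbarK, le_refl _⟩
  have hMK : M ⊆ K := fun x hx => hx.1
  set H : WeakSpace ℝ U → ℝ :=
    fun x => ∑ i, J ((toWeakSpace ℝ U).symm x) i with hHdef
  have hHlsc : LowerSemicontinuousOn H M :=
    (lowerSemicontinuousOn_sum fun i _ => hlsc i).mono hMK
  have hHbdd : BddBelow (H '' M) := by
    refine ⟨∑ i, c i, ?_⟩
    rintro v ⟨x, hxM, rfl⟩
    obtain ⟨u, hu, rfl⟩ := hMK hxM
    simp only [H, LinearEquiv.symm_apply_apply]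
    exact Finset.sum_le_sum fun i _ => hc i u hu
  obtain ⟨xstar, hxstarM, hxstarmin⟩ := exists_min_of_lsc hMc hMne hHlsc hHbdd
  obtain ⟨u0, hu0, hu0'⟩ := hMK hxstarM
  have hubar : (toWeakSpace ℝ U).symm xstar = u0 := by rw [← hu0']; simp
  refine ⟨(toWeakSpace ℝ U).symm xstar, hubar ▸ hu0, ?_, ?_⟩
  · intro u hu
    have h1 : G xstar ≤ G xbar := hxstarM.2
    have h2 : G xbar ≤ G (toWeakSpace ℝ U u) :=
      hxbarmin _ (Set.mem_image_of_mem _ hu)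
    have := h1.trans h2
    rwa [hGval] at this
  · rintro ut hut ⟨hle, hne⟩
    have hGut : G (toWeakSpace ℝ U ut) ≤ G xstar := by
      rw [hGval]
      show psScal hk0 z r (J ut) ≤ G xstar
      have : G xstar = psScal hk0 z r (J ((toWeakSpace ℝ U).symm xstar)) := rfl
      rw [this]
      apply Finset.sup'_le
      intro i _
      refine le_trans ?_ (Finset.le_sup' _ (Finset.mem_univ i))
      exact (div_le_div_iff_of_pos_right (hr i)).mpr (by linarith [hle i])
    have hutM : toWeakSpace ℝ U ut ∈ M :=
      ⟨Set.mem_image_of_mem _ hut, hGut.trans hxstarM.2⟩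
    have hHle : H xstar ≤ H (toWeakSpace ℝ U ut) := hxstarmin _ hutM
    have hHut : H (toWeakSpace ℝ U ut) = ∑ i, J ut i := by
      simp [H]
    obtain ⟨j, hj⟩ := Function.ne_iff.mp hne
    have hsum : ∑ i, J ut i < ∑ i, J ((toWeakSpace ℝ U).symm xstar) i :=
      Finset.sum_lt_sum (fun i _ => hle i) ⟨j, Finset.mem_univ j, lt_of_le_of_ne (hle j) hj⟩
    have hHstar : H xstar = ∑ i, J ((toWeakSpace ℝ U).symm xstar) i := rfl
    rw [hHstar, hHut] at hHle
    linarith
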